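/- Kullback–Leibler divergence bounded by squared Hellinger distance under a bounded likelihood ratio. For every B ≥ 1 there exists a constant C = C(B) > 0 such that for all probability densities p₀ and q on a σ-finite measure space (Ω, μ) satisfying p₀ ≤ B q μ-almost everywhere, one has d_K(p₀, q) ≤ C · d_H²(p₀, q). -/

import Mathlib

/-!
Pointwise, `p log (p / q)` lies between `p - q` and `p - q + (2√B + 1) (√p - √q)²` as soon as
`p ≤ B q`. The lower bound makes the Kullback–Leibler integrand integrable, and integrating the
upper bound gives the theorem, since `∫ (p - q) = 0` for two densities.
-/

open MeasureTheory Real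

/-- A (probability) density on `(Ω, μ)`: a nonnegative measurable function integrating to 1. -/
def IsDensity {Ω : Type*} [MeasurableSpace Ω] (μ : Measure Ω) (p : Ω → ℝ) : Prop :=
  Measurable p ∧ (∀ x, 0 ≤ p x) ∧ Integrable p μ ∧ ∫ x, p x ∂μ = 1

/-- Squared Hellinger distance `d_H²(p, q) = ∫ (√p − √q)² dμ`. -/
noncomputable def hellSq {Ω : Type*} [MeasurableSpace Ω] (μ : Measure Ω) (p q : Ω → ℝ) : ℝ :=
  ∫ x, (Real.sqrt (p x) - Real.sqrt (q x)) ^ 2 ∂μ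

/-- Kullback–Leibler divergence `d_K(p, q) = ∫ p log(p/q) dμ`. -/
noncomputable def klD {Ω : Type*} [MeasurableSpace Ω] (μ : Measure Ω) (p q : Ω → ℝ) : ℝ :=
  ∫ x, p x * Real.log (p x / q x) ∂μ

namespace Real

variable {B p q : ℝ}

lemma sub_le_mul_log_div (hp : 0 ≤ p) (hq : 0 ≤ q) (hpq : p ≤ B * q) :
    p - q ≤ p * log (p / q) := by
  rcases hp.eq_or_lt with rfl | hp
  · simpa using hq
  have hq : 0 < q := hq.lt_of_ne (by rintro rfl; linarith)
  calc p - q = p * (1 - (p / q)⁻¹) := by field_simp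
    _ ≤ p * log (p / q) := by gcongr; exact one_sub_inv_le_log_of_pos (by positivity)

/-- With `t = √p / √q ≤ √B` and `log (p / q) ≤ 2 (t - 1)`, this reduces to
`2 t³ - 3 t² + 1 = (t - 1)² (2 t + 1)`. -/
lemma mul_log_div_le (hp : 0 ≤ p) (hq : 0 ≤ q) (hpq : p ≤ B * q) :
    p * log (p / q) ≤ p - q + (2 * √B + 1) * (√p - √q) ^ 2 := by
  rcases hq.eq_or_lt with rfl | hq
  · obtain rfl : p = 0 := le_antisymm (by simpa using hpq) hp
    simp
  set a := √p
  set b := √q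
  have hb : 0 < b := sqrt_pos.2 hq
  have ha : 0 ≤ a := sqrt_nonneg p
  have hab : a ≤ √B * b := by
    rw [← sqrt_mul' B hq.le]; exact sqrt_le_sqrt hpq
  have hratio : a / b ≤ √B := (div_le_iff₀ hb).2 hab
  have hsq : p / q = (a / b) ^ 2 := by rw [div_pow, sq_sqrt hp, sq_sqrt hq.le]
  calc p * log (p / q) = a ^ 2 * (2 * log (a / b)) := by
        rw [hsq, log_pow, sq_sqrt hp]; push_cast; ring
    _ ≤ a ^ 2 * (2 * (a / b - 1)) := by
        rcases ha.eq_or_lt with ha | ha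
        · simp [← ha]
        · gcongr; exact log_le_sub_one_of_pos (by positivity)
    _ = a ^ 2 - b ^ 2 + (2 * (a / b) + 1) * (a - b) ^ 2 := by field_simp; ring
    _ ≤ p - q + (2 * √B + 1) * (a - b) ^ 2 := by
        rw [sq_sqrt hp, sq_sqrt hq.le]; gcongr

lemma sq_sqrt_sub_sqrt_le (hp : 0 ≤ p) (hq : 0 ≤ q) : (√p - √q) ^ 2 ≤ p + q := by
  nlinarith [sq_sqrt hp, sq_sqrt hq, sqrt_nonneg p, sqrt_nonneg q]

end Real

section

variable {Ω : Type*} [MeasurableSpace Ω] {μ : Measure Ω} {p q : Ω → ℝ}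

lemma integrable_sq_sqrt_sub_sqrt (hp : Integrable p μ) (hq : Integrable q μ)
    (hp₀ : 0 ≤ᵐ[μ] p) (hq₀ : 0 ≤ᵐ[μ] q) :
    Integrable (fun x ↦ (√(p x) - √(q x)) ^ 2) μ := by
  refine integrable_of_le_of_le (g₁ := 0) (g₂ := p + q) ?_ ?_ ?_ (integrable_zero _ _ _)
    (hp.add hq)
  · have := hp.aestronglyMeasurable; have := hq.aestronglyMeasurable; fun_prop
  · exact ae_of_all _ fun x ↦ sq_nonneg _
  · filter_upwards [hp₀, hq₀] with x hpx hqx using sq_sqrt_sub_sqrt_le hpx hqx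

lemma klD_le_mul_hellSq_of_ae_le_mul {B : ℝ} (hp : IsDensity μ p) (hq : IsDensity μ q)
    (hpq : ∀ᵐ x ∂μ, p x ≤ B * q x) :
    klD μ p q ≤ (2 * √B + 1) * hellSq μ p q := by
  obtain ⟨hp_meas, hp₀, hp_int, hp_one⟩ := hp
  obtain ⟨hq_meas, hq₀, hq_int, hq_one⟩ := hq
  have hH := integrable_sq_sqrt_sub_sqrt hp_int hq_int (ae_of_all _ hp₀) (ae_of_all _ hq₀)
  have hdiff : Integrable (fun x ↦ p x - q x) μ := hp_int.sub hq_int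
  have hupper := hdiff.add (hH.const_mul (2 * √B + 1))
  have hK : Integrable (fun x ↦ p x * log (p x / q x)) μ := by
    refine integrable_of_le_of_le (hp_meas.mul (hp_meas.div hq_meas).log).aestronglyMeasurable
      ?_ ?_ hdiff hupper
    · filter_upwards [hpq] with x hx using sub_le_mul_log_div (hp₀ x) (hq₀ x) hx
    · filter_upwards [hpq] with x hx using mul_log_div_le (hp₀ x) (hq₀ x) hx
  calc klD μ p q ≤ ∫ x, p x - q x + (2 * √B + 1) * (√(p x) - √(q x)) ^ 2 ∂μ :=
        integral_mono_ae hK hupper <| by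
          filter_upwards [hpq] with x hx using mul_log_div_le (hp₀ x) (hq₀ x) hx
    _ = (2 * √B + 1) * hellSq μ p q := by
        rw [integral_add hdiff (hH.const_mul _), integral_sub hp_int hq_int,
          hp_one, hq_one, integral_const_mul, hellSq, sub_self, zero_add]

end

theorem kl_le_const_mul_hellSq_of_bounded_ratio.{u} (B : ℝ) (hB : 1 ≤ B) :
    ∃ C : ℝ, 0 < C ∧
      ∀ (Ω : Type u) [MeasurableSpace Ω] (μ : Measure Ω) [SigmaFinite μ] (p₀ q : Ω → ℝ),
        IsDensity μ p₀ → IsDensity μ q → (∀ᵐ x ∂μ, p₀ x ≤ B * q x) →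
          klD μ p₀ q ≤ C * hellSq μ p₀ q :=
  ⟨2 * √B + 1, by positivity, fun _ _ _ _ _ _ hp hq hpq ↦ klD_le_mul_hellSq_of_ae_le_mul hp hq hpq⟩
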